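/- The oracle decorrelated estimator is unbiased, E[τ̂_dc.oracle] = τ*, and its n-rescaled mean-squared error equals n·E[(τ̂_dc.oracle − τ*)²] = ((1 − π_M)/π_M)·‖Δ(1)‖_n² + ((1 − π_M̄)/π_M̄)·‖Δ(0)‖_n² + 2·⟨Δ(1), Δ(0)⟩_n. -/

import Mathlib

/-!
Only the units selected by `M i` (inside the treated group) or `Mb i` (inside the control
group) enter the residual part of the estimator, and for them the observed outcome is `y i(1)`,
respectively `y i(0)`. Hence `τ̂` is an affine function of the sum of the inverse-probability
weighted contrasts `Δ i(1) M i / π_M - Δ i(0) Mb i / π_Mb`, which are independent across units.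
Since `M i Mb i = 0`, each contrast has mean `Δ i(1) - Δ i(0)` and variance
`(1 - π_M)/π_M Δ i(1)² + (1 - π_Mb)/π_Mb Δ i(0)² + 2 Δ i(1) Δ i(0)`, and the variance of the
sum is the sum of the variances.
-/

open MeasureTheory ProbabilityTheory
open scoped BigOperators

section ZeroOneValued

variable {Ω : Type*} [MeasurableSpace Ω] {P : Measure Ω}

lemma memLp_of_forall_eq_zero_or_one [IsFiniteMeasure P] {X : Ω → ℝ} (hX : Measurable X)
    (h01 : ∀ ω, X ω = 0 ∨ X ω = 1) (p : ENNReal) : MemLp X p P :=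
  MemLp.of_bound hX.aestronglyMeasurable 1 <| ae_of_all _ fun ω => by
    rcases h01 ω with h | h <;> simp [h]

lemma integral_of_forall_eq_zero_or_one {X : Ω → ℝ} (hX : Measurable X)
    (h01 : ∀ ω, X ω = 0 ∨ X ω = 1) {p : ℝ} (hp : 0 ≤ p)
    (hP : P {ω | X ω = 1} = ENNReal.ofReal p) : P[X] = p := by
  have hs : MeasurableSet {ω | X ω = 1} := hX (measurableSet_singleton 1)
  have hX_eq : X = Set.indicator {ω | X ω = 1} fun _ => 1 := by
    funext ω
    rcases h01 ω with h | h <;> simp [h]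
  rw [hX_eq, integral_indicator_const _ hs]
  simp [measureReal_def, hP, hp]

lemma integral_const_mul_add_const_mul {A B : Ω → ℝ} (hA : Integrable A P) (hB : Integrable B P)
    (a b : ℝ) : P[fun ω => a * A ω + b * B ω] = a * P[A] + b * P[B] := by
  rw [integral_add (hA.const_mul a) (hB.const_mul b), integral_const_mul, integral_const_mul]

lemma variance_const_mul_add_const_mul_of_mul_eq_zero [IsProbabilityMeasure P] {A B : Ω → ℝ}
    (hA : Measurable A) (hB : Measurable B) (hA01 : ∀ ω, A ω = 0 ∨ A ω = 1)
    (hB01 : ∀ ω, B ω = 0 ∨ B ω = 1) (hAB : ∀ ω, A ω * B ω = 0) (a b : ℝ) :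
    Var[fun ω => a * A ω + b * B ω; P]
      = a ^ 2 * P[A] + b ^ 2 * P[B] - (a * P[A] + b * P[B]) ^ 2 := by
  have hAm := memLp_of_forall_eq_zero_or_one (P := P) hA hA01
  have hBm := memLp_of_forall_eq_zero_or_one (P := P) hB hB01
  have hAi := (hAm 1).integrable le_rfl
  have hBi := (hBm 1).integrable le_rfl
  have hsq : (fun ω => a * A ω + b * B ω) ^ 2 = fun ω => a ^ 2 * A ω + b ^ 2 * B ω := by
    funext ω
    have hA2 : A ω ^ 2 = A ω := by rcases hA01 ω with h | h <;> simp [h]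
    have hB2 : B ω ^ 2 = B ω := by rcases hB01 ω with h | h <;> simp [h]
    simp only [Pi.pow_apply]
    linear_combination a ^ 2 * hA2 + b ^ 2 * hB2 + 2 * a * b * hAB ω
  have hm : MemLp (fun ω => a * A ω + b * B ω) 2 P :=
    ((hAm 2).const_mul a).add ((hBm 2).const_mul b)
  rw [variance_eq_sub hm, hsq, integral_const_mul_add_const_mul hAi hBi,
    integral_const_mul_add_const_mul hAi hBi]

variable [IsProbabilityMeasure P] {A B : Ω → ℝ} {p q : ℝ}

lemma integral_div_mul_sub_div_mul (hA : Measurable A) (hB : Measurable B)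
    (hA01 : ∀ ω, A ω = 0 ∨ A ω = 1) (hB01 : ∀ ω, B ω = 0 ∨ B ω = 1) (hp : 0 < p) (hq : 0 < q)
    (hPA : P {ω | A ω = 1} = ENNReal.ofReal p) (hPB : P {ω | B ω = 1} = ENNReal.ofReal q)
    (a b : ℝ) : P[fun ω => a / p * A ω - b / q * B ω] = a - b := by
  simp only [sub_eq_add_neg, ← neg_mul]
  rw [integral_const_mul_add_const_mul
      ((memLp_of_forall_eq_zero_or_one hA hA01 1).integrable le_rfl)
      ((memLp_of_forall_eq_zero_or_one hB hB01 1).integrable le_rfl),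
    integral_of_forall_eq_zero_or_one hA hA01 hp.le hPA,
    integral_of_forall_eq_zero_or_one hB hB01 hq.le hPB]
  field_simp

lemma variance_div_mul_sub_div_mul (hA : Measurable A) (hB : Measurable B)
    (hA01 : ∀ ω, A ω = 0 ∨ A ω = 1) (hB01 : ∀ ω, B ω = 0 ∨ B ω = 1) (hAB : ∀ ω, A ω * B ω = 0)
    (hp : 0 < p) (hq : 0 < q)
    (hPA : P {ω | A ω = 1} = ENNReal.ofReal p) (hPB : P {ω | B ω = 1} = ENNReal.ofReal q)
    (a b : ℝ) : Var[fun ω => a / p * A ω - b / q * B ω; P]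
      = (1 - p) / p * a ^ 2 + (1 - q) / q * b ^ 2 + 2 * (a * b) := by
  simp only [sub_eq_add_neg, ← neg_mul]
  rw [variance_const_mul_add_const_mul_of_mul_eq_zero hA hB hA01 hB01 hAB,
    integral_of_forall_eq_zero_or_one hA hA01 hp.le hPA,
    integral_of_forall_eq_zero_or_one hB hB01 hq.le hPB]
  field_simp
  ring

end ZeroOneValued

section AffineSum

variable {Ω ι : Type*} [MeasurableSpace Ω] {P : Measure Ω} [IsProbabilityMeasure P] [Fintype ι]
  {X : ι → Ω → ℝ}

lemma integral_const_mul_sum_add_const (hX : ∀ i, Integrable (X i) P) (c d : ℝ) :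
    ∫ ω, (c * ∑ i, X i ω + d) ∂P = c * ∑ i, P[X i] + d := by
  rw [integral_add ((integrable_finsetSum _ fun i _ => hX i).const_mul c) (integrable_const d),
    integral_const_mul, integral_finsetSum _ fun i _ => hX i]
  simp

lemma integral_sq_sub_of_affine_sum_of_pairwise_indepFun (hX : ∀ i, MemLp (X i) 2 P)
    (hind : Pairwise fun i j => X i ⟂ᵢ[P] X j) (c d : ℝ) :
    ∫ ω, (c * ∑ i, X i ω + d - (c * ∑ i, P[X i] + d)) ^ 2 ∂P = c ^ 2 * ∑ i, Var[X i; P] := by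
  have hS : MemLp (∑ i, X i) 2 P := memLp_finsetSum' _ fun i _ => hX i
  have hvar : Var[fun ω => c * ∑ i, X i ω + d; P] = c ^ 2 * ∑ i, Var[X i; P] := by
    simp only [← Finset.sum_apply (s := Finset.univ) (g := X)]
    rw [variance_add_const (hS.aestronglyMeasurable.const_mul c), variance_const_mul,
      IndepFun.variance_sum (fun i _ => hX i) fun i _ j _ hij => hind hij]
  have hXm := fun i => (hX i).aemeasurable
  rw [← hvar, variance_eq_integral (by fun_prop),
    integral_const_mul_sum_add_const fun i => (hX i).integrable one_le_two]

end AffineSum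

lemma mul_eq_zero_of_le_of_le_one_sub {t m m' : ℝ} (hm : m = 0 ∨ m = 1)
    (hm' : m' = 0 ∨ m' = 1) (h : m ≤ t) (h' : m' ≤ 1 - t) : m * m' = 0 := by
  rcases hm with rfl | rfl
  · exact zero_mul m'
  · rcases hm' with rfl | rfl
    · exact mul_zero 1
    · linarith

lemma ite_mul_of_le {t m u v : ℝ} (ht : t = 0 ∨ t = 1) (hm : m = 0 ∨ m = 1) (h : m ≤ t) :
    (if t = 1 then u else v) * m = u * m := by
  rcases hm with rfl | rfl
  · simp
  · rcases ht with rfl | rfl <;> norm_num at *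

lemma ite_mul_of_le_one_sub {t m u v : ℝ} (hm : m = 0 ∨ m = 1) (h : m ≤ 1 - t) :
    (if t = 1 then u else v) * m = v * m := by
  rcases hm with rfl | rfl
  · simp
  · rw [if_neg (by linarith)]

theorem oracle_dc_unbiased_and_mse_general
    {Ω : Type*} [MeasurableSpace Ω] (P : Measure Ω) [IsProbabilityMeasure P]
    (n d : ℕ)
    (πM πMb : ℝ)
    (hπM : πM ∈ Set.Ioo (0 : ℝ) 1)
    (hπMb : πMb ∈ Set.Ioo (0 : ℝ) 1)
    (y1 y0 : Fin n → ℝ) (x : Fin n → Fin d → ℝ)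
    (f1 f0 : (Fin d → ℝ) → ℝ)
    -- the decorrelating quadruples, coupled with the treatment indicators
    (T R M Rb Mb : Fin n → Ω → ℝ)
    (hMmeas : ∀ i, Measurable (M i))
    (hMbmeas : ∀ i, Measurable (Mb i))
    (hT01 : ∀ i ω, T i ω = 0 ∨ T i ω = 1)
    (hM01 : ∀ i ω, M i ω = 0 ∨ M i ω = 1)
    (hMb01 : ∀ i ω, Mb i ω = 0 ∨ Mb i ω = 1)
    (hMber : ∀ i, P {ω | M i ω = 1} = ENNReal.ofReal πM)
    (hMbber : ∀ i, P {ω | Mb i ω = 1} = ENNReal.ofReal πMb)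
    (hcouple : ∀ i ω, max (R i ω) (M i ω) ≤ T i ω ∧ max (Rb i ω) (Mb i ω) ≤ 1 - T i ω)
    (hiid : iIndepFun
      (fun i ω => (T i ω, R i ω, M i ω, Rb i ω, Mb i ω)) P)
    -- observed outcomes, residuals, target, estimator
    (Y : Fin n → Ω → ℝ)
    (hY : ∀ i ω, Y i ω = if T i ω = 1 then y1 i else y0 i)
    (Δ1 Δ0 : Fin n → ℝ)
    (hΔ1 : ∀ i, Δ1 i = y1 i - f1 (x i)) (hΔ0 : ∀ i, Δ0 i = y0 i - f0 (x i))
    (τstar : ℝ) (hτstar : τstar = (1 / (n : ℝ)) * ∑ i, (y1 i - y0 i))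
    (τhat : Ω → ℝ)
    (hτhat : ∀ ω, τhat ω =
      (1 / ((n : ℝ) * πM)) * ∑ i, (Y i ω - f1 (x i)) * M i ω
        - (1 / ((n : ℝ) * πMb)) * ∑ i, (Y i ω - f0 (x i)) * Mb i ω
        + (1 / (n : ℝ)) * ∑ i, (f1 (x i) - f0 (x i))) :
    (∫ ω, τhat ω ∂P = τstar) ∧
      (n : ℝ) * ∫ ω, (τhat ω - τstar) ^ 2 ∂P
        = (1 - πM) / πM * ((1 / (n : ℝ)) * ∑ i, (Δ1 i) ^ 2)
          + (1 - πMb) / πMb * ((1 / (n : ℝ)) * ∑ i, (Δ0 i) ^ 2)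
          + 2 * ((1 / (n : ℝ)) * ∑ i, Δ1 i * Δ0 i) := by
  obtain ⟨hπM0, -⟩ := hπM
  obtain ⟨hπMb0, -⟩ := hπMb
  have hMT : ∀ i ω, M i ω ≤ T i ω := fun i ω => (le_max_right _ _).trans (hcouple i ω).1
  have hMbT : ∀ i ω, Mb i ω ≤ 1 - T i ω := fun i ω => (le_max_right _ _).trans (hcouple i ω).2
  set W : Fin n → Ω → ℝ := fun i ω => Δ1 i / πM * M i ω - Δ0 i / πMb * Mb i ω with hW
  have hτhat_eq : τhat = fun ω => 1 / (n : ℝ) * ∑ i, W i ω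
      + 1 / (n : ℝ) * ∑ i, (f1 (x i) - f0 (x i)) := by
    funext ω
    have h1 : ∀ i, (Y i ω - f1 (x i)) * M i ω = Δ1 i * M i ω := fun i => by
      rw [sub_mul, hY, ite_mul_of_le (hT01 i ω) (hM01 i ω) (hMT i ω), hΔ1, sub_mul]
    have h0 : ∀ i, (Y i ω - f0 (x i)) * Mb i ω = Δ0 i * Mb i ω := fun i => by
      rw [sub_mul, hY, ite_mul_of_le_one_sub (hMb01 i ω) (hMbT i ω), hΔ0, sub_mul]
    simp only [hτhat, h1, h0, hW, Finset.mul_sum, ← Finset.sum_sub_distrib]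
    congr 1
    exact Finset.sum_congr rfl fun i _ => by ring
  have hW_mean : ∀ i, P[W i] = Δ1 i - Δ0 i := fun i =>
    integral_div_mul_sub_div_mul (hMmeas i) (hMbmeas i) (hM01 i) (hMb01 i) hπM0 hπMb0
      (hMber i) (hMbber i) _ _
  have hW_var : ∀ i, Var[W i; P]
      = (1 - πM) / πM * Δ1 i ^ 2 + (1 - πMb) / πMb * Δ0 i ^ 2 + 2 * (Δ1 i * Δ0 i) := fun i =>
    variance_div_mul_sub_div_mul (hMmeas i) (hMbmeas i) (hM01 i) (hMb01 i)
      (fun ω => mul_eq_zero_of_le_of_le_one_sub (hM01 i ω) (hMb01 i ω) (hMT i ω) (hMbT i ω))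
      hπM0 hπMb0 (hMber i) (hMbber i) _ _
  have hW_memLp : ∀ i, MemLp (W i) 2 P := fun i =>
    ((memLp_of_forall_eq_zero_or_one (hMmeas i) (hM01 i) 2).const_mul _).sub
      ((memLp_of_forall_eq_zero_or_one (hMbmeas i) (hMb01 i) 2).const_mul _)
  have hW_indep : Pairwise fun i j => W i ⟂ᵢ[P] W j := fun i j hij =>
    (hiid.indepFun hij).comp
      (φ := fun q : ℝ × ℝ × ℝ × ℝ × ℝ => Δ1 i / πM * q.2.2.1 - Δ0 i / πMb * q.2.2.2.2)
      (ψ := fun q : ℝ × ℝ × ℝ × ℝ × ℝ => Δ1 j / πM * q.2.2.1 - Δ0 j / πMb * q.2.2.2.2)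
      (by fun_prop) (by fun_prop)
  have hτstar_eq : τstar
      = 1 / (n : ℝ) * ∑ i, P[W i] + 1 / (n : ℝ) * ∑ i, (f1 (x i) - f0 (x i)) := by
    simp only [hτstar, hW_mean, hΔ1, hΔ0, ← mul_add, ← Finset.sum_add_distrib]
    ring
  constructor
  · rw [hτstar_eq, hτhat_eq,
      integral_const_mul_sum_add_const fun i => (hW_memLp i).integrable one_le_two]
  · rw [hτhat_eq, hτstar_eq, integral_sq_sub_of_affine_sum_of_pairwise_indepFun hW_memLp hW_indep]
    simp only [hW_var, Finset.sum_add_distrib, ← Finset.mul_sum]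
    -- also for `n = 0`, as `0⁻¹ = 0`
    have hn_inv : (n : ℝ) * (1 / n) ^ 2 = 1 / n := by
      simpa [sq, mul_assoc] using inv_mul_mul_self (n : ℝ)⁻¹
    rw [← mul_assoc, hn_inv]
    ring

/-- the oracle decorrelated estimator is unbiased for the ATE and its
`n`-rescaled mean-squared error equals
`((1−πM)/πM)‖Δ(1)‖_n² + ((1−πM̄)/πM̄)‖Δ(0)‖_n² + 2⟨Δ(1),Δ(0)⟩_n`. -/
theorem oracle_dc_unbiased_and_mse
    {Ω : Type*} [MeasurableSpace Ω] (P : Measure Ω) [IsProbabilityMeasure P]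
    (n d : ℕ) (hn : 0 < n)
    (πT πR πM πRb πMb : ℝ)
    (hπT : πT ∈ Set.Ioo (0 : ℝ) 1) (hπR : πR ∈ Set.Ioo (0 : ℝ) 1)
    (hπM : πM ∈ Set.Ioo (0 : ℝ) 1) (hπRb : πRb ∈ Set.Ioo (0 : ℝ) 1)
    (hπMb : πMb ∈ Set.Ioo (0 : ℝ) 1)
    (y1 y0 : Fin n → ℝ) (x : Fin n → Fin d → ℝ)
    (f1 f0 : (Fin d → ℝ) → ℝ)
    -- the decorrelating quadruples, coupled with the treatment indicators
    (T R M Rb Mb : Fin n → Ω → ℝ)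
    (hTmeas : ∀ i, Measurable (T i)) (hRmeas : ∀ i, Measurable (R i))
    (hMmeas : ∀ i, Measurable (M i)) (hRbmeas : ∀ i, Measurable (Rb i))
    (hMbmeas : ∀ i, Measurable (Mb i))
    (hT01 : ∀ i ω, T i ω = 0 ∨ T i ω = 1) (hR01 : ∀ i ω, R i ω = 0 ∨ R i ω = 1)
    (hM01 : ∀ i ω, M i ω = 0 ∨ M i ω = 1) (hRb01 : ∀ i ω, Rb i ω = 0 ∨ Rb i ω = 1)
    (hMb01 : ∀ i ω, Mb i ω = 0 ∨ Mb i ω = 1)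
    (hTber : ∀ i, P {ω | T i ω = 1} = ENNReal.ofReal πT)
    (hRber : ∀ i, P {ω | R i ω = 1} = ENNReal.ofReal πR)
    (hMber : ∀ i, P {ω | M i ω = 1} = ENNReal.ofReal πM)
    (hRbber : ∀ i, P {ω | Rb i ω = 1} = ENNReal.ofReal πRb)
    (hMbber : ∀ i, P {ω | Mb i ω = 1} = ENNReal.ofReal πMb)
    (hRM : ∀ i, IndepFun (R i) (M i) P)
    (hRbMb : ∀ i, IndepFun (Rb i) (Mb i) P)
    (hrel : πT = πM + πR - πM * πR)
    (hrelb : 1 - πT = πMb + πRb - πMb * πRb)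
    (hcouple : ∀ i ω, max (R i ω) (M i ω) ≤ T i ω ∧ max (Rb i ω) (Mb i ω) ≤ 1 - T i ω)
    (hiid : iIndepFun
      (fun i ω => (T i ω, R i ω, M i ω, Rb i ω, Mb i ω)) P)
    -- observed outcomes, residuals, target, estimator
    (Y : Fin n → Ω → ℝ)
    (hY : ∀ i ω, Y i ω = if T i ω = 1 then y1 i else y0 i)
    (Δ1 Δ0 : Fin n → ℝ)
    (hΔ1 : ∀ i, Δ1 i = y1 i - f1 (x i)) (hΔ0 : ∀ i, Δ0 i = y0 i - f0 (x i))
    (τstar : ℝ) (hτstar : τstar = (1 / (n : ℝ)) * ∑ i, (y1 i - y0 i))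
    (τhat : Ω → ℝ)
    (hτhat : ∀ ω, τhat ω =
      (1 / ((n : ℝ) * πM)) * ∑ i, (Y i ω - f1 (x i)) * M i ω
        - (1 / ((n : ℝ) * πMb)) * ∑ i, (Y i ω - f0 (x i)) * Mb i ω
        + (1 / (n : ℝ)) * ∑ i, (f1 (x i) - f0 (x i))) :
    (∫ ω, τhat ω ∂P = τstar) ∧
      (n : ℝ) * ∫ ω, (τhat ω - τstar) ^ 2 ∂P
        = (1 - πM) / πM * ((1 / (n : ℝ)) * ∑ i, (Δ1 i) ^ 2)
          + (1 - πMb) / πMb * ((1 / (n : ℝ)) * ∑ i, (Δ0 i) ^ 2)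
          + 2 * ((1 / (n : ℝ)) * ∑ i, Δ1 i * Δ0 i) :=
  oracle_dc_unbiased_and_mse_general P n d πM πMb hπM hπMb y1 y0 x f1 f0 T R M Rb Mb hMmeas hMbmeas
    hT01 hM01 hMb01 hMber hMbber hcouple hiid Y hY Δ1 Δ0 hΔ1 hΔ0 τstar hτstar τhat hτhat
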